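/- For every δ with 0 < δ ≤ 1/2 and every φ ∈ ℝ, the regularized convex energy part satisfies the uniform lower bound f_{1,δ}(φ) ≥ −log 2. -/

import Mathlib

/- On `[δ, 1 - δ]` the bound is the entropy bound `f₁ ≥ -log 2`, which follows termwise from
`log y ≥ 1 - 1/y` at `y = 2φ` and `y = 2(1 - φ)`. Outside, each quadratic extension dominates the
value of `f₁` at the nearer endpoint, because its slope `f₁'` there has the sign that makes the
linear term nonnegative for `δ ≤ 1/2`. -/

/-- The Flory–Huggins convex energy part `f₁(φ) = φ log φ + (1-φ) log(1-φ)`. -/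
noncomputable def f1 (φ : ℝ) : ℝ := φ * Real.log φ + (1 - φ) * Real.log (1 - φ)

/-- The regularized convex energy part `f_{1,δ}`, obtained from `f₁` by quadratic
extension outside `[δ, 1-δ]`, using `f₁'(s) = log(s/(1-s))` and `f₁''(s) = 1/(s(1-s))`. -/
noncomputable def f1d (δ φ : ℝ) : ℝ :=
  if φ ≤ δ then
    f1 δ + Real.log (δ / (1 - δ)) * (φ - δ) + 1 / (δ * (1 - δ)) * (φ - δ) ^ 2 / 2
  else if φ ≤ 1 - δ then f1 φ
  else
    f1 (1 - δ) + Real.log ((1 - δ) / δ) * (φ - (1 - δ))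
      + 1 / (δ * (1 - δ)) * (φ - (1 - δ)) ^ 2 / 2

open Real

lemma sub_inv_le_mul_log_mul {a x : ℝ} (ha : 0 < a) (hx : 0 < x) : x - a⁻¹ ≤ x * log (a * x) := by
  have h := one_sub_inv_le_log_of_pos (mul_pos ha hx)
  calc x - a⁻¹ = x * (1 - (a * x)⁻¹) := by field_simp
    _ ≤ x * log (a * x) := mul_le_mul_of_nonneg_left h hx.le

lemma neg_log_two_le_f1 {x : ℝ} (hx0 : 0 < x) (hx1 : x < 1) : -log 2 ≤ f1 x := by
  have hx := sub_inv_le_mul_log_mul two_pos hx0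
  have hy := sub_inv_le_mul_log_mul two_pos (sub_pos.2 hx1)
  rw [log_mul two_ne_zero hx0.ne'] at hx
  rw [log_mul two_ne_zero (sub_pos.2 hx1).ne'] at hy
  unfold f1
  linarith

lemma f1_le_f1d_of_le {δ φ : ℝ} (hδ0 : 0 < δ) (hδ : δ ≤ 1 / 2) (hφ : φ ≤ δ) :
    f1 δ ≤ f1d δ φ := by
  have hslope : log (δ / (1 - δ)) ≤ 0 :=
    log_nonpos (by bound) ((div_le_one (by linarith)).2 (by linarith))
  have hlin : 0 ≤ log (δ / (1 - δ)) * (φ - δ) :=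
    mul_nonneg_of_nonpos_of_nonpos hslope (by linarith)
  have hquad : 0 ≤ 1 / (δ * (1 - δ)) * (φ - δ) ^ 2 / 2 := by
    have : 0 < 1 - δ := by linarith
    positivity
  rw [f1d, if_pos hφ]
  linarith

lemma f1_one_sub_le_f1d_of_lt {δ φ : ℝ} (hδ0 : 0 < δ) (hδ : δ ≤ 1 / 2) (hφ : 1 - δ < φ) :
    f1 (1 - δ) ≤ f1d δ φ := by
  have hslope : 0 ≤ log ((1 - δ) / δ) := log_nonneg ((le_div_iff₀ hδ0).2 (by linarith))
  have hlin : 0 ≤ log ((1 - δ) / δ) * (φ - (1 - δ)) := mul_nonneg hslope (by linarith)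
  have hquad : 0 ≤ 1 / (δ * (1 - δ)) * (φ - (1 - δ)) ^ 2 / 2 := by
    have : 0 < 1 - δ := by linarith
    positivity
  rw [f1d, if_neg (by linarith), if_neg hφ.not_ge]
  linarith

/-- Uniform lower bound `f_{1,δ}(φ) ≥ -log 2`. -/
theorem regularized_energy_lower_bound (δ : ℝ) (hδ0 : 0 < δ) (hδ : δ ≤ 1 / 2) (φ : ℝ) :
    f1d δ φ ≥ -Real.log 2 := by
  rcases le_or_gt φ δ with hφ | hφ
  · exact (neg_log_two_le_f1 hδ0 (by linarith)).trans (f1_le_f1d_of_le hδ0 hδ hφ)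
  rcases le_or_gt φ (1 - δ) with hφ' | hφ'
  · rw [f1d, if_neg hφ.not_ge, if_pos hφ']
    exact neg_log_two_le_f1 (by linarith) (by linarith)
  · exact (neg_log_two_le_f1 (by linarith) (by linarith)).trans
      (f1_one_sub_le_f1d_of_lt hδ0 hδ hφ')
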